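/- Let ρ ∈ (1/2,1), μ₀ ∈ (0,1), π ∈ (0,1), c > 0, γ := c/(1-π), and μ₂(∅) := ρμ₀+(1-ρ)(1-μ₀). Then -c(2-μ₀) + 1 - ρ(1-μ₀) > -c(1-πμ₀) + π[1 - ρ(1-μ₀)] + (1-π)μ₂(∅) if and only if γ < γ̄' := μ₀(1-ρ)/(1 - μ₀(1-π)). -/

import Mathlib

/-!
The payoff gap is affine in `c`: it equals `(1 - π) μ₀ (1 - ρ) - c (1 - μ₀ (1 - π))`, because
`1 - ρ (1 - μ₀) - μ₂(∅) = (1 - ρ) μ₀`. Both `1 - π` and `1 - μ₀ (1 - π) = π + (1 - π)(1 - μ₀)` are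
positive, so dividing the sign condition by them gives the threshold on `γ = c / (1 - π)`.
-/

lemma deviation_payoff_sub_obey_payoff (ρ μ₀ π c : ℝ) :
    (-c*(2-μ₀) + 1 - ρ*(1-μ₀)) -
        (-c*(1-π*μ₀) + π*(1 - ρ*(1-μ₀)) + (1-π)*(ρ*μ₀ + (1-ρ)*(1-μ₀))) =
      μ₀*(1-ρ)*(1-π) - c*(1 - μ₀*(1-π)) := by
  ring

lemma one_sub_mul_one_sub_pos {μ₀ π : ℝ} (hμ : μ₀ < 1) (hπ1 : 0 < π) (hπ2 : π < 1) :
    0 < 1 - μ₀*(1-π) := by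
  have h : 1 - μ₀*(1-π) = π + (1-π)*(1-μ₀) := by ring
  rw [h]
  have : 0 < (1-π)*(1-μ₀) := mul_pos (by linarith) (by linarith)
  linarith

theorem stmt_11_general (ρ μ₀ π c : ℝ)
    (hμ2 : μ₀ < 1) (hπ1 : 0 < π) (hπ2 : π < 1) :
    -c*(2-μ₀) + 1 - ρ*(1-μ₀) >
      -c*(1-π*μ₀) + π*(1 - ρ*(1-μ₀)) + (1-π)*(ρ*μ₀ + (1-ρ)*(1-μ₀)) ↔
    c/(1-π) < μ₀*(1-ρ)/(1 - μ₀*(1-π)) := by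
  rw [gt_iff_lt, ← sub_pos, deviation_payoff_sub_obey_payoff, sub_pos,
    div_lt_div_iff₀ (sub_pos.mpr hπ2) (one_sub_mul_one_sub_pos hμ2 hπ1 hπ2)]

theorem stmt_11 (ρ μ₀ π c : ℝ) (hρ1 : 1/2 < ρ) (hρ2 : ρ < 1)
    (hμ1 : 0 < μ₀) (hμ2 : μ₀ < 1) (hπ1 : 0 < π) (hπ2 : π < 1) (hc : 0 < c) :
    -c*(2-μ₀) + 1 - ρ*(1-μ₀) >
      -c*(1-π*μ₀) + π*(1 - ρ*(1-μ₀)) + (1-π)*(ρ*μ₀ + (1-ρ)*(1-μ₀)) ↔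
    c/(1-π) < μ₀*(1-ρ)/(1 - μ₀*(1-π)) :=
  stmt_11_general ρ μ₀ π c hμ2 hπ1 hπ2
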